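/- Define H_n(v) = ∏_{k=0}^n 1/(k+1/2+iv) and G_n(v) = (∏_{k=0}^{n-1}(k+1/2-iv))/(∏_{k=0}^{n}(k+1/2+iv)). Then for every n, G_n(v) = ∑_{k=0}^n (-1)^{n+k} ((n+k)!/(k!(n-k)!)) H_k(v) for all real v. -/

import Mathlib

open Complex Finset

noncomputable def HIOU (n : ℕ) (v : ℝ) : ℂ :=
  ∏ k ∈ Finset.range (n + 1), ((k : ℂ) + 1 / 2 + Complex.I * v)⁻¹

noncomputable def GIOU (n : ℕ) (v : ℝ) : ℂ :=
  (∏ k ∈ Finset.range n, ((k : ℂ) + 1 / 2 - Complex.I * v)) /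
    (∏ k ∈ Finset.range (n + 1), ((k : ℂ) + 1 / 2 + Complex.I * v))

noncomputable def Acoef (n k : ℕ) : ℂ :=
  if k ≤ n then (-1 : ℂ) ^ (n + k) * ((n + k).factorial : ℂ) /
        ((k.factorial : ℂ) * ((n - k).factorial : ℂ)) else 0

lemma Acoef_key (n k : ℕ) (h : k ≤ n) :
    ((n : ℂ) + k + 1) * Acoef n k - ((n : ℂ) + 1 - k) * Acoef (n + 1) k
      = Acoef n (k + 1) + Acoef (n + 1) (k + 1) := by
  obtain ⟨s, rfl⟩ := Nat.exists_eq_add_of_le h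
  cases s with
  | zero =>
    simp only [Acoef, Nat.add_zero, le_refl, if_true, Nat.le_succ, Nat.sub_self,
      Nat.lt_irrefl, if_true]
    rw [show k + 1 - k = 1 by omega]
    simp only [Nat.factorial_zero, Nat.factorial_one, Nat.cast_one, mul_one]
    have e1 : (-1 : ℂ) ^ (k + 1 + k) = -(-1 : ℂ) ^ (k + k) := by
      rw [show k + 1 + k = (k + k) + 1 by omega, pow_succ]; ring
    have e2 : (-1 : ℂ) ^ (k + 1 + (k + 1)) = (-1 : ℂ) ^ (k + k) := by
      rw [show k + 1 + (k + 1) = (k + k) + 2 by omega, pow_add]; ring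
    rw [e1, e2]
    have f1 : ((k + 1 + k).factorial : ℂ) = (k + 1 + k) * ((k + k).factorial : ℂ) := by
      rw [show k + 1 + k = (k + k) + 1 by omega, Nat.factorial_succ]; push_cast; ring
    have f2 : ((k + 1 + (k + 1)).factorial : ℂ)
        = (k + 1 + (k + 1)) * (k + 1 + k) * ((k + k).factorial : ℂ) := by
      rw [show k + 1 + (k + 1) = (k + k) + 1 + 1 by omega, Nat.factorial_succ,
        Nat.factorial_succ]; push_cast; ring_nf
    have f3 : (((k + 1).factorial : ℂ)) = (k + 1) * (k.factorial : ℂ) := by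
      rw [Nat.factorial_succ]; push_cast; ring
    rw [f1, f2, f3]
    have hk : (k.factorial : ℂ) ≠ 0 := Nat.cast_ne_zero.2 (Nat.factorial_ne_zero k)
    have hk1 : (k : ℂ) + 1 ≠ 0 := by
      intro hc
      have := congrArg Complex.re hc
      simp at this
      nlinarith [this, Nat.cast_nonneg (α := ℝ) k]
    rw [if_neg (by omega : ¬ (k + 1 ≤ k))]
    field_simp
    ring
  | succ s =>
    simp only [Acoef]
    rw [if_pos (show k ≤ k + (s+1) by omega), if_pos (show k ≤ k + (s+1) + 1 by omega),
      if_pos (show k + 1 ≤ k + (s+1) by omega), if_pos (show k + 1 ≤ k + (s+1) + 1 by omega)]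
    rw [show k + (s+1) - k = s + 1 by omega, show k + (s+1) + 1 - k = s + 2 by omega,
      show k + (s+1) - (k+1) = s by omega, show k + (s+1) + 1 - (k+1) = s + 1 by omega]
    have e1 : (-1 : ℂ) ^ (k + (s+1) + 1 + k) = -(-1 : ℂ) ^ (k + (s+1) + k) := by
      rw [show k + (s+1) + 1 + k = (k + (s+1) + k) + 1 by omega, pow_succ]; ring
    have e2 : (-1 : ℂ) ^ (k + (s+1) + (k + 1)) = -(-1 : ℂ) ^ (k + (s+1) + k) := by
      rw [show k + (s+1) + (k + 1) = (k + (s+1) + k) + 1 by omega, pow_succ]; ring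
    have e3 : (-1 : ℂ) ^ (k + (s+1) + 1 + (k + 1)) = (-1 : ℂ) ^ (k + (s+1) + k) := by
      rw [show k + (s+1) + 1 + (k + 1) = (k + (s+1) + k) + 2 by omega, pow_add]; ring
    rw [e1, e2, e3]
    have f1 : ((k + (s+1) + 1 + k).factorial : ℂ)
        = (k + (s+1) + 1 + k) * ((k + (s+1) + k).factorial : ℂ) := by
      rw [show k + (s+1) + 1 + k = (k + (s+1) + k) + 1 by omega, Nat.factorial_succ]
      push_cast; ring
    have f2 : ((k + (s+1) + (k + 1)).factorial : ℂ)
        = (k + (s+1) + 1 + k) * ((k + (s+1) + k).factorial : ℂ) := by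
      rw [show k + (s+1) + (k + 1) = (k + (s+1) + k) + 1 by omega, Nat.factorial_succ]
      push_cast; ring
    have f3 : ((k + (s+1) + 1 + (k + 1)).factorial : ℂ)
        = (k + (s+1) + 1 + (k + 1)) * (k + (s+1) + 1 + k) * ((k + (s+1) + k).factorial : ℂ) := by
      rw [show k + (s+1) + 1 + (k + 1) = (k + (s+1) + k) + 1 + 1 by omega, Nat.factorial_succ,
        Nat.factorial_succ]
      push_cast; ring
    rw [f1, f2, f3]
    have g1 : (((s+2).factorial : ℕ) : ℂ) = (s + 2) * (((s+1).factorial : ℕ) : ℂ) := by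
      rw [Nat.factorial_succ]; push_cast; ring
    have g2 : (((s+1).factorial : ℕ) : ℂ) = (s + 1) * ((s.factorial : ℕ) : ℂ) := by
      rw [Nat.factorial_succ]; push_cast; ring
    have g3 : (((k+1).factorial : ℕ) : ℂ) = (k + 1) * ((k.factorial : ℕ) : ℂ) := by
      rw [Nat.factorial_succ]; push_cast; ring
    rw [g1, g2, g3]
    have hk : (k.factorial : ℂ) ≠ 0 := Nat.cast_ne_zero.2 (Nat.factorial_ne_zero k)
    have hs : (s.factorial : ℂ) ≠ 0 := Nat.cast_ne_zero.2 (Nat.factorial_ne_zero s)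
    have hk1 : (k : ℂ) + 1 ≠ 0 := Nat.cast_add_one_ne_zero k
    have hs1 : (s : ℂ) + 1 ≠ 0 := Nat.cast_add_one_ne_zero s
    have hs2 : (s : ℂ) + 2 ≠ 0 := by
      have : ((s : ℂ) + 2) = ((s + 2 : ℕ) : ℂ) := by push_cast; ring
      rw [this]
      exact Nat.cast_ne_zero.2 (by omega)
    field_simp
    push_cast
    ring


lemma Acoef_def (n k : ℕ) : Acoef n k = if k ≤ n then (-1 : ℂ) ^ (n + k) * ((n + k).factorial : ℂ) /
        ((k.factorial : ℂ) * ((n - k).factorial : ℂ)) else 0 := rfl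

lemma polyId (n : ℕ) (x : ℂ) :
    ∏ j ∈ Finset.range n, ((j : ℂ) + 1 / 2 - x)
      = ∑ k ∈ Finset.range (n + 1),
          Acoef n k * ∏ j ∈ Finset.Ico (k + 1) (n + 1), ((j : ℂ) + 1 / 2 + x) := by
  induction n with
  | zero => simp [Acoef_def]
  | succ n ih =>
    have f : ℕ → ℂ := fun k => 0
    set F : ℕ → ℂ := fun k =>
      (Acoef n k + Acoef (n + 1) k) * ∏ j ∈ Finset.Ico k (n + 1), ((j : ℂ) + 1 / 2 + x) with hF
    have hsum :
        (∑ k ∈ Finset.range (n + 1),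
            Acoef n k * ∏ j ∈ Finset.Ico (k + 1) (n + 1), ((j : ℂ) + 1 / 2 + x)) * ((n : ℂ) + 1 / 2 - x)
          - ∑ k ∈ Finset.range (n + 1),
              Acoef (n + 1) k * ((∏ j ∈ Finset.Ico (k + 1) (n + 1), ((j : ℂ) + 1 / 2 + x))
                * (((n + 1 : ℕ) : ℂ) + 1 / 2 + x))
          = Acoef (n + 1) (n + 1) := by
      rw [sum_mul, ← Finset.sum_sub_distrib]
      have step : ∀ k ∈ Finset.range (n + 1),
          Acoef n k * (∏ j ∈ Finset.Ico (k + 1) (n + 1), ((j : ℂ) + 1 / 2 + x)) * ((n : ℂ) + 1 / 2 - x)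
            - Acoef (n + 1) k * ((∏ j ∈ Finset.Ico (k + 1) (n + 1), ((j : ℂ) + 1 / 2 + x))
                * (((n + 1 : ℕ) : ℂ) + 1 / 2 + x))
          = F (k + 1) - F k := by
        intro k hk
        have hk' : k ≤ n := by simpa using Nat.lt_succ_iff.mp (Finset.mem_range.mp hk)
        have hR : (∏ j ∈ Finset.Ico k (n + 1), ((j : ℂ) + 1 / 2 + x))
            = ((k : ℂ) + 1 / 2 + x) * ∏ j ∈ Finset.Ico (k + 1) (n + 1), ((j : ℂ) + 1 / 2 + x) :=
          Finset.prod_eq_prod_Ico_succ_bot (by omega) _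
        rw [hF]
        simp only []
        rw [hR]
        have key := Acoef_key n k hk'
        push_cast
        linear_combination (∏ j ∈ Finset.Ico (k + 1) (n + 1), ((j : ℂ) + 1 / 2 + x)) * key
      rw [Finset.sum_congr rfl step, Finset.sum_range_sub F]
      have h1 : F (n + 1) = Acoef (n + 1) (n + 1) := by
        rw [hF]
        simp only [Finset.Ico_self, Finset.prod_empty, mul_one]
        rw [Acoef_def n (n + 1), if_neg (by omega)]
        ring
      have h0 : F 0 = 0 := by
        rw [hF]
        simp only []
        rw [Acoef_def n 0, Acoef_def (n + 1) 0, if_pos (by omega), if_pos (by omega)]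
        simp only [Nat.add_zero, Nat.sub_zero, Nat.factorial_zero, Nat.cast_one, one_mul]
        have hfn : ((n.factorial : ℕ) : ℂ) ≠ 0 := Nat.cast_ne_zero.2 (Nat.factorial_ne_zero n)
        have hfn1 : (((n + 1).factorial : ℕ) : ℂ) ≠ 0 :=
          Nat.cast_ne_zero.2 (Nat.factorial_ne_zero (n + 1))
        rw [pow_succ]
        field_simp
        ring
      rw [h1, h0, sub_zero]
    rw [Finset.prod_range_succ, ih]
    conv_rhs => rw [Finset.sum_range_succ]
    have hIco : ∀ k ∈ Finset.range (n + 1),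
        Acoef (n + 1) k * ∏ j ∈ Finset.Ico (k + 1) (n + 1 + 1), ((j : ℂ) + 1 / 2 + x)
          = Acoef (n + 1) k * ((∏ j ∈ Finset.Ico (k + 1) (n + 1), ((j : ℂ) + 1 / 2 + x))
              * (((n + 1 : ℕ) : ℂ) + 1 / 2 + x)) := by
      intro k hk
      have hk' : k < n + 1 := Finset.mem_range.mp hk
      rw [Finset.prod_Ico_succ_top (show k + 1 ≤ n + 1 by omega)]
    rw [Finset.sum_congr rfl hIco]
    simp only [Finset.Ico_self, Finset.prod_empty, mul_one]
    linear_combination hsum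


/-- `G_n = ∑_{k=0}^n (-1)^{n+k} ((n+k)!/(k!(n-k)!)) H_k`. -/
theorem stmt_8 (n : ℕ) (v : ℝ) :
    GIOU n v = ∑ k ∈ Finset.range (n + 1),
      ((-1 : ℂ) ^ (n + k) * ((n + k).factorial : ℂ) /
        ((k.factorial : ℂ) * ((n - k).factorial : ℂ))) * HIOU k v := by
  have hne : ∀ j : ℕ, ((j : ℂ) + 1 / 2 + Complex.I * v) ≠ 0 := by
    intro j hc
    have := congrArg Complex.re hc
    simp [Complex.add_re, Complex.mul_re] at this
    nlinarith [Nat.cast_nonneg (α := ℝ) j, this]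
  have hD : ∀ m : ℕ, (∏ j ∈ Finset.range m, ((j : ℂ) + 1 / 2 + Complex.I * v)) ≠ 0 :=
    fun m => Finset.prod_ne_zero_iff.2 fun j _ => hne j
  rw [GIOU, polyId n (Complex.I * v), Finset.sum_div]
  refine Finset.sum_congr rfl fun k hk => ?_
  have hk' : k ≤ n := Nat.lt_succ_iff.mp (Finset.mem_range.mp hk)
  have hH : HIOU k v = (∏ j ∈ Finset.range (k + 1), ((j : ℂ) + 1 / 2 + Complex.I * v))⁻¹ := by
    rw [HIOU]; exact Finset.prod_inv_distrib (f := fun j : ℕ => ((j : ℂ) + 1 / 2 + Complex.I * v))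
  have hP : (∏ j ∈ Finset.Ico (k + 1) (n + 1), ((j : ℂ) + 1 / 2 + Complex.I * v)) ≠ 0 :=
    Finset.prod_ne_zero_iff.2 fun j _ => hne j
  rw [hH, Acoef_def, if_pos hk',
    ← Finset.prod_range_mul_prod_Ico _ (show k + 1 ≤ n + 1 by omega),
    mul_div_mul_right _ _ hP, div_eq_mul_inv]
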